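/- arXiv:2503.00504 — 6 statements merged into one kernel-verified Lean document; each statement's English description precedes it below -/
import Mathlib

section
/- For every integer q ≥ 1 and all reals z, λ with 0 < z ≤ λ: (z+λ)^{2q} − λ^q·(z+λ)^q ≥ (2^{2q} − 2^q)·z^{2q}; in particular the left-hand side is positive and z^{2q} / ((z+λ)^{2q} − (λ(z+λ))^q) ≤ 1/(2^{2q} − 2^q). Equivalently, the iterated ridge filter satisfies z^{2q−1}·ψ_λ(z)² ≤ (2^{2q} − 2^q)⁻¹ · λ^{2q} · φ_λ(z) for all 0 < z ≤ λ. -/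
lemma ridge_key (q : ℕ) (hq : 1 ≤ q) (z lam : ℝ) (hz : 0 < z) (hzl : z ≤ lam) :
    ((2 : ℝ) ^ (2 * q) - 2 ^ q) * z ^ (2 * q)
      ≤ (z + lam) ^ (2 * q) - lam ^ q * (z + lam) ^ q := by
  have hs : (2:ℝ) * z ≤ z + lam := by linarith
  have h2z : (0:ℝ) ≤ 2 * z := by linarith
  have hzn : (0:ℝ) ≤ z := hz.le
  have hsum : (∑ i ∈ Finset.range q, (2*z) ^ i * z ^ (q - 1 - i))
      ≤ ∑ i ∈ Finset.range q, (z+lam) ^ i * lam ^ (q - 1 - i) := by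
    apply Finset.sum_le_sum
    intro i _
    have hsz : (0:ℝ) < z + lam := by linarith
    exact mul_le_mul (pow_le_pow_left₀ h2z hs i) (pow_le_pow_left₀ hzn hzl _)
      (by positivity) (pow_nonneg hsz.le i)
  have h1 : (2*z) ^ q - z ^ q ≤ (z+lam) ^ q - lam ^ q := by
    have e1 := geom_sum₂_mul (2*z) z q
    have e2 := geom_sum₂_mul (z+lam) lam q
    have t1 : (2*z) - z = z := by ring
    have t2 : (z+lam) - lam = z := by ring
    rw [t1] at e1
    rw [t2] at e2
    rw [← e1, ← e2]
    exact mul_le_mul_of_nonneg_right hsum hzn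
  have hnn : (0:ℝ) ≤ (2*z) ^ q - z ^ q := by
    have := pow_le_pow_left₀ hzn (by linarith : z ≤ 2*z) q
    linarith
  have h2 : (2*z) ^ q * ((2*z) ^ q - z ^ q)
      ≤ (z+lam) ^ q * ((z+lam) ^ q - lam ^ q) :=
    mul_le_mul (pow_le_pow_left₀ h2z hs q) h1 hnn (pow_nonneg (by linarith) q)
  calc ((2 : ℝ) ^ (2 * q) - 2 ^ q) * z ^ (2 * q)
      = (2*z) ^ q * ((2*z) ^ q - z ^ q) := by
        rw [two_mul q, pow_add, pow_add, mul_pow]; ring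
    _ ≤ (z+lam) ^ q * ((z+lam) ^ q - lam ^ q) := h2
    _ = (z + lam) ^ (2 * q) - lam ^ q * (z + lam) ^ q := by
        rw [two_mul q, pow_add]; ring

/-- For the iterated ridge filter with `q ≥ 1` and `0 < z ≤ λ`:
`(z+λ)^{2q} − λ^q(z+λ)^q ≥ (2^{2q} − 2^q) z^{2q}`, the left-hand side is positive,
`z^{2q}/((z+λ)^{2q} − (λ(z+λ))^q) ≤ 1/(2^{2q} − 2^q)`, and equivalently
`z^{2q−1}·ψ_λ(z)² ≤ (2^{2q} − 2^q)⁻¹·λ^{2q}·φ_λ(z)`. -/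
theorem iterated_ridge_filter_small_z_bound
    (q : ℕ) (hq : 1 ≤ q) (z lam : ℝ) (hz : 0 < z) (hzl : z ≤ lam) :
    (z + lam) ^ (2 * q) - lam ^ q * (z + lam) ^ q
        ≥ ((2 : ℝ) ^ (2 * q) - 2 ^ q) * z ^ (2 * q) ∧
    0 < (z + lam) ^ (2 * q) - lam ^ q * (z + lam) ^ q ∧
    z ^ (2 * q) / ((z + lam) ^ (2 * q) - (lam * (z + lam)) ^ q)
        ≤ 1 / ((2 : ℝ) ^ (2 * q) - 2 ^ q) ∧
    z ^ (2 * q - 1) * ((lam / (z + lam)) ^ q) ^ 2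
        ≤ ((2 : ℝ) ^ (2 * q) - 2 ^ q)⁻¹ * lam ^ (2 * q) *
            ((1 - (lam / (z + lam)) ^ q) / z) := by
  have hkey := ridge_key q hq z lam hz hzl
  have hc : (0:ℝ) < (2 : ℝ) ^ (2 * q) - 2 ^ q := by
    have : (2:ℝ) ^ q < 2 ^ (2*q) := by
      apply pow_lt_pow_right₀ one_lt_two
      omega
    linarith
  have hzq : (0:ℝ) < z ^ (2*q) := by positivity
  have hpos : 0 < (z + lam) ^ (2 * q) - lam ^ q * (z + lam) ^ q := by nlinarith
  have hs : (0:ℝ) < z + lam := by linarith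
  have hlam : (0:ℝ) < lam := lt_of_lt_of_le hz hzl
  refine ⟨hkey, hpos, ?_, ?_⟩
  · rw [mul_pow, div_le_div_iff₀ hpos hc]
    nlinarith
  · have hzp : z ^ (2*q - 1) * z = z ^ (2*q) := by
      rw [← pow_succ]
      congr 1
      omega
    have hL : z ^ (2 * q - 1) * ((lam / (z + lam)) ^ q) ^ 2
        = z ^ (2*q-1) * lam ^ (2*q) / (z+lam) ^ (2*q) := by
      rw [div_pow, div_pow, ← pow_mul, ← pow_mul, mul_comm q 2]
      ring
    have hR : ((2 : ℝ) ^ (2 * q) - 2 ^ q)⁻¹ * lam ^ (2 * q) *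
            ((1 - (lam / (z + lam)) ^ q) / z)
        = lam ^ (2*q) * ((z+lam) ^ q - lam ^ q)
            / (((2 : ℝ) ^ (2 * q) - 2 ^ q) * (z+lam) ^ q * z) := by
      rw [div_pow, eq_div_iff (by positivity)]
      field_simp
    rw [hL, hR, div_le_div_iff₀ (by positivity) (by positivity)]
    have key2 : ((2 : ℝ) ^ (2 * q) - 2 ^ q) * z ^ (2 * q) * (z+lam) ^ q
        ≤ ((z + lam) ^ (2 * q) - lam ^ q * (z + lam) ^ q) * (z+lam) ^ q :=
      mul_le_mul_of_nonneg_right hkey (by positivity)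
    have hlq : (0:ℝ) ≤ lam ^ (2*q) := by positivity
    calc z ^ (2*q-1) * lam ^ (2*q) * (((2:ℝ) ^ (2*q) - 2 ^ q) * (z+lam) ^ q * z)
        = lam ^ (2*q) * (((2:ℝ) ^ (2*q) - 2 ^ q) * (z ^ (2*q-1) * z) * (z+lam) ^ q) := by
          ring
      _ = lam ^ (2*q) * (((2:ℝ) ^ (2*q) - 2 ^ q) * z ^ (2*q) * (z+lam) ^ q) := by
          rw [hzp]
      _ ≤ lam ^ (2*q) * (((z + lam) ^ (2*q) - lam ^ q * (z + lam) ^ q) * (z+lam) ^ q) :=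
          mul_le_mul_of_nonneg_left key2 hlq
      _ = lam ^ (2*q) * ((z+lam) ^ q - lam ^ q) * (z + lam) ^ (2*q) := by
          rw [two_mul q, pow_add]; ring
end

section
/- Let τ ≥ 1 and s, γ be reals with τ < s ≤ 2τ, let p be a natural number with p(s+1) ≤ γ < (p+1)(s+1), and set Δ = γ − p(s+1). Suppose γ ≥ 1, 0 ≤ Δ ≤ τ, and ℓ = p + Δ/(2τ). Then, with I = −2ℓτ + 2pτ − ps, II = −s(p+1), III = p − γ, IV = 2ℓ − γ − p − 1, and m = min{γ−p, (τ(γ−p+1)+ps)/(τ+1), s(p+1)}: II ≤ I, I = III, IV ≤ III, m = γ − p, and max{I, II} = max{III, IV} = −m. -/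
/-- Bias–variance exponent balancing for a spectral algorithm with qualification `τ` in
the saturated regime `τ < s ≤ 2τ`, case `γ ≥ 1`, `0 ≤ Δ ≤ τ`, `ℓ = p + Δ/(2τ)`. -/
theorem exponent_balance_case1
    (τ s γ : ℝ) (p : ℕ) (hτ : 1 ≤ τ) (hτs : τ < s) (hs2τ : s ≤ 2 * τ)
    (hp1 : (p : ℝ) * (s + 1) ≤ γ) (hp2 : γ < ((p : ℝ) + 1) * (s + 1))
    (hγ : 1 ≤ γ)
    (Δ : ℝ) (hΔ : Δ = γ - (p : ℝ) * (s + 1)) (hΔ1 : 0 ≤ Δ) (hΔ2 : Δ ≤ τ)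
    (ℓ : ℝ) (hℓ : ℓ = (p : ℝ) + Δ / (2 * τ)) :
    let I := -2 * ℓ * τ + 2 * (p : ℝ) * τ - (p : ℝ) * s
    let II := -s * ((p : ℝ) + 1)
    let III := (p : ℝ) - γ
    let IV := 2 * ℓ - γ - (p : ℝ) - 1
    let m := min (γ - (p : ℝ))
      (min ((τ * (γ - (p : ℝ) + 1) + (p : ℝ) * s) / (τ + 1)) (s * ((p : ℝ) + 1)))
    II ≤ I ∧ I = III ∧ IV ≤ III ∧ m = γ - (p : ℝ) ∧
      max I II = -m ∧ max III IV = -m := by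
  have hτ0 : (0:ℝ) < τ := by linarith
  have hℓτ : 2 * ℓ * τ = 2 * (p:ℝ) * τ + Δ := by
    rw [hℓ]; field_simp
  have hΔ' : Δ = γ - (p:ℝ) * s - (p:ℝ) := by rw [hΔ]; ring
  intro I II III IV m
  have hI : I = (p:ℝ) - γ := by simp only [I]; linarith
  have hII : II ≤ I := by
    simp only [II]; rw [hI]; nlinarith [hΔ2, hτs, hΔ']
  have hIV : IV ≤ III := by
    simp only [IV, III]
    nlinarith [hℓτ, hΔ2, hτ0]
  have hm : m = γ - (p:ℝ) := by
    have h1 : γ - (p:ℝ) ≤ (τ * (γ - (p:ℝ) + 1) + (p:ℝ) * s) / (τ + 1) := by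
      rw [le_div_iff₀ (by linarith)]; nlinarith [hΔ2, hΔ']
    have h2 : γ - (p:ℝ) ≤ s * ((p:ℝ) + 1) := by nlinarith [hΔ2, hτs, hΔ']
    simp only [m]
    exact min_eq_left (le_min h1 h2)
  refine ⟨hII, by rw [hI], hIV, hm, ?_, ?_⟩
  · rw [max_eq_left hII, hI, hm]; ring
  · rw [max_eq_left hIV, hm]; simp only [III]; ring
end

section
/- Let τ ≥ 1 and s, γ be reals with τ < s ≤ 2τ, let p be a natural number with p(s+1) ≤ γ < (p+1)(s+1), and set Δ = γ − p(s+1). Suppose γ ≥ 1, τ ≤ Δ ≤ s + s/τ − 1, and ℓ = p + (Δ+1)/(2τ+2). Then, with I = −2ℓτ + 2pτ − ps, II = −s(p+1), III = p − γ, IV = 2ℓ − γ − p − 1, and m = min{γ−p, (τ(γ−p+1)+ps)/(τ+1), s(p+1)}: II ≤ I, I = IV, III ≤ IV, m = (τ(γ−p+1)+ps)/(τ+1), and max{I, II} = max{III, IV} = −m. -/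
/-!
Write `Δ = γ - p(s+1)` and `E = τ(Δ+1)/(τ+1)`. At `ℓ = p + (Δ+1)/(2τ+2)` the bias exponent
`I` and the variance exponent `IV` both equal `-(ps) - E`, and the middle candidate rate is
`ps + E`. The two side conditions `τ ≤ Δ` and `Δ ≤ s + s/τ - 1` say exactly `E ≤ Δ` and
`E ≤ s`, which make `I` and `IV` the dominant exponents and `ps + E` the minimal rate.
-/

lemma mul_add_one_div_add_one_le_self {τ Δ : ℝ} (hτ : 0 < τ + 1) (hΔ : τ ≤ Δ) :
    τ * (Δ + 1) / (τ + 1) ≤ Δ := by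
  rw [div_le_iff₀ hτ]
  linarith

lemma mul_add_one_div_add_one_le_of_le_add_div {τ Δ s : ℝ} (hτ : 0 < τ) (hΔ : Δ ≤ s + s / τ - 1) :
    τ * (Δ + 1) / (τ + 1) ≤ s := by
  have hτΔ : τ * Δ ≤ τ * s + s - τ := by
    calc τ * Δ ≤ τ * (s + s / τ - 1) := mul_le_mul_of_nonneg_left hΔ hτ.le
      _ = τ * s + s - τ := by field_simp
  rw [div_le_iff₀ (by linarith)]
  linarith

section Exponents

variable (τ s p Δ : ℝ)

lemma bias_exponent_eq (hτ : τ + 1 ≠ 0) :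
    -2 * (p + (Δ + 1) / (2 * τ + 2)) * τ + 2 * p * τ - p * s =
      -(p * s) - τ * (Δ + 1) / (τ + 1) := by
  have : 2 * τ + 2 = 2 * (τ + 1) := by ring
  rw [this]
  field_simp
  ring

lemma variance_exponent_eq (hτ : τ + 1 ≠ 0) :
    2 * (p + (Δ + 1) / (2 * τ + 2)) - (Δ + p * (s + 1)) - p - 1 =
      -(p * s) - τ * (Δ + 1) / (τ + 1) := by
  have : 2 * τ + 2 = 2 * (τ + 1) := by ring
  rw [this]
  field_simp
  ring

lemma balanced_rate_eq (hτ : τ + 1 ≠ 0) :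
    (τ * (Δ + p * (s + 1) - p + 1) + p * s) / (τ + 1) = p * s + τ * (Δ + 1) / (τ + 1) := by
  field_simp
  ring

end Exponents

theorem exponent_balance_case2_general
    (τ s γ : ℝ) (p : ℕ) (hτ : 1 ≤ τ)
    (Δ : ℝ) (hΔ : Δ = γ - (p : ℝ) * (s + 1)) (hΔ1 : τ ≤ Δ) (hΔ2 : Δ ≤ s + s / τ - 1)
    (ℓ : ℝ) (hℓ : ℓ = (p : ℝ) + (Δ + 1) / (2 * τ + 2)) :
    let I := -2 * ℓ * τ + 2 * (p : ℝ) * τ - (p : ℝ) * s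
    let II := -s * ((p : ℝ) + 1)
    let III := (p : ℝ) - γ
    let IV := 2 * ℓ - γ - (p : ℝ) - 1
    let m := min (γ - (p : ℝ))
      (min ((τ * (γ - (p : ℝ) + 1) + (p : ℝ) * s) / (τ + 1)) (s * ((p : ℝ) + 1)))
    II ≤ I ∧ I = IV ∧ III ≤ IV ∧
      m = (τ * (γ - (p : ℝ) + 1) + (p : ℝ) * s) / (τ + 1) ∧
      max I II = -m ∧ max III IV = -m := by
  obtain rfl : γ = Δ + p * (s + 1) := by linarith
  subst hℓ
  intro I II III IV m
  have hτ0 : 0 < τ := by linarith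
  have hτ1 : τ + 1 ≠ 0 := by positivity
  have hEΔ := mul_add_one_div_add_one_le_self (by linarith) hΔ1
  have hEs := mul_add_one_div_add_one_le_of_le_add_div hτ0 hΔ2
  have hI : I = -(p * s) - τ * (Δ + 1) / (τ + 1) := bias_exponent_eq τ s p Δ hτ1
  have hIV : IV = -(p * s) - τ * (Δ + 1) / (τ + 1) := variance_exponent_eq τ s p Δ hτ1
  have hM := balanced_rate_eq τ s p Δ hτ1
  have hm : m = p * s + τ * (Δ + 1) / (τ + 1) := by
    simp only [m, hM]
    have hY : p * s + τ * (Δ + 1) / (τ + 1) ≤ s * (p + 1) := by linarith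
    have hX : p * s + τ * (Δ + 1) / (τ + 1) ≤ Δ + p * (s + 1) - p := by linarith
    rw [min_eq_left hY, min_eq_right hX]
  have hII : II ≤ I := by simp only [II, hI]; linarith
  have hIII : III ≤ IV := by simp only [III, hIV]; linarith
  refine ⟨hII, hI.trans hIV.symm, hIII, hm.trans hM.symm, ?_, ?_⟩
  · rw [max_eq_left hII, hI, hm]; ring
  · rw [max_eq_right hIII, hIV, hm]; ring

/-- Bias–variance exponent balancing for a spectral algorithm with qualification `τ` in
the saturated regime `τ < s ≤ 2τ`, case `γ ≥ 1`, `τ ≤ Δ ≤ s + s/τ − 1`,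
`ℓ = p + (Δ+1)/(2τ+2)`. -/
theorem exponent_balance_case2
    (τ s γ : ℝ) (p : ℕ) (hτ : 1 ≤ τ) (hτs : τ < s) (hs2τ : s ≤ 2 * τ)
    (hp1 : (p : ℝ) * (s + 1) ≤ γ) (hp2 : γ < ((p : ℝ) + 1) * (s + 1))
    (hγ : 1 ≤ γ)
    (Δ : ℝ) (hΔ : Δ = γ - (p : ℝ) * (s + 1)) (hΔ1 : τ ≤ Δ) (hΔ2 : Δ ≤ s + s / τ - 1)
    (ℓ : ℝ) (hℓ : ℓ = (p : ℝ) + (Δ + 1) / (2 * τ + 2)) :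
    let I := -2 * ℓ * τ + 2 * (p : ℝ) * τ - (p : ℝ) * s
    let II := -s * ((p : ℝ) + 1)
    let III := (p : ℝ) - γ
    let IV := 2 * ℓ - γ - (p : ℝ) - 1
    let m := min (γ - (p : ℝ))
      (min ((τ * (γ - (p : ℝ) + 1) + (p : ℝ) * s) / (τ + 1)) (s * ((p : ℝ) + 1)))
    II ≤ I ∧ I = IV ∧ III ≤ IV ∧
      m = (τ * (γ - (p : ℝ) + 1) + (p : ℝ) * s) / (τ + 1) ∧
      max I II = -m ∧ max III IV = -m :=
  exponent_balance_case2_general τ s γ p hτ Δ hΔ hΔ1 hΔ2 ℓ hℓ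
end

section
/- Let τ ≥ 1 and s, γ be reals with τ < s ≤ 2τ, let p be a natural number with p(s+1) ≤ γ < (p+1)(s+1), and set Δ = γ − p(s+1). Suppose γ ≥ 1, Δ ≥ s + s/τ − 1, and ℓ = p + (Δ+1−s)/2. Then, with I = −2ℓτ + 2pτ − ps, II = −s(p+1), III = p − γ, IV = 2ℓ − γ − p − 1, and m = min{γ−p, (τ(γ−p+1)+ps)/(τ+1), s(p+1)}: I ≤ II, II = IV, III ≤ IV, m = s(p+1), and max{I, II} = max{III, IV} = −m. -/
/-- Bias–variance exponent balancing for a spectral algorithm with qualification `τ` in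
the saturated regime `τ < s ≤ 2τ`, case `γ ≥ 1`, `Δ ≥ s + s/τ − 1`, `ℓ = p + (Δ+1−s)/2`. -/
theorem exponent_balance_case3
    (τ s γ : ℝ) (p : ℕ) (hτ : 1 ≤ τ) (hτs : τ < s) (hs2τ : s ≤ 2 * τ)
    (hp1 : (p : ℝ) * (s + 1) ≤ γ) (hp2 : γ < ((p : ℝ) + 1) * (s + 1))
    (hγ : 1 ≤ γ)
    (Δ : ℝ) (hΔ : Δ = γ - (p : ℝ) * (s + 1)) (hΔ1 : s + s / τ - 1 ≤ Δ)
    (ℓ : ℝ) (hℓ : ℓ = (p : ℝ) + (Δ + 1 - s) / 2) :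
    let I := -2 * ℓ * τ + 2 * (p : ℝ) * τ - (p : ℝ) * s
    let II := -s * ((p : ℝ) + 1)
    let III := (p : ℝ) - γ
    let IV := 2 * ℓ - γ - (p : ℝ) - 1
    let m := min (γ - (p : ℝ))
      (min ((τ * (γ - (p : ℝ) + 1) + (p : ℝ) * s) / (τ + 1)) (s * ((p : ℝ) + 1)))
    I ≤ II ∧ II = IV ∧ III ≤ IV ∧ m = s * ((p : ℝ) + 1) ∧
      max I II = -m ∧ max III IV = -m := by
  intro I II III IV m
  have hτ0 : (0:ℝ) < τ := by linarith
  have hp0 : (0:ℝ) ≤ (p:ℝ) := Nat.cast_nonneg p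
  have hkey : s ≤ τ * (Δ + 1 - s) := by
    have : s / τ ≤ Δ + 1 - s := by linarith
    calc s = (s / τ) * τ := by field_simp
    _ ≤ (Δ + 1 - s) * τ := by nlinarith
    _ = τ * (Δ + 1 - s) := by ring
  have h12 : I ≤ II := by
    simp only [I, II, hℓ]
    nlinarith
  have h24 : II = IV := by
    simp only [II, IV, hℓ, hΔ]; ring
  have h34 : III ≤ IV := by
    simp only [III, IV, hℓ, hΔ]
    nlinarith
  have hγbig : (p:ℝ) * s + (p:ℝ) + s + s / τ - 1 ≤ γ := by
    have := hΔ1; rw [hΔ] at this; linarith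
  have hsτ : 1 ≤ s / τ := by
    rw [le_div_iff₀ hτ0]; linarith
  have hm1 : s * ((p:ℝ) + 1) ≤ γ - (p:ℝ) := by nlinarith
  have hm2 : s * ((p:ℝ) + 1) ≤ (τ * (γ - (p:ℝ) + 1) + (p:ℝ) * s) / (τ + 1) := by
    rw [le_div_iff₀ (by linarith : (0:ℝ) < τ + 1)]
    have hsd : s ≤ τ * (s / τ) := by field_simp; exact le_refl s
    nlinarith
  have hmeq : m = s * ((p:ℝ) + 1) := by
    simp only [m]
    rw [min_eq_right hm2, min_eq_right hm1]
  refine ⟨h12, h24, h34, hmeq, ?_, ?_⟩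
  · rw [max_eq_right h12, hmeq]; simp only [II]; ring
  · rw [max_eq_right h34, hmeq, ← h24]; simp only [II]; ring
end

section
/- Let τ ≥ 1 and s be reals with 0 < s ≤ 2τ, let p be a natural number, and let γ be a real with p(s+1) + s + (max{s, τ} − τ)/τ ≤ γ < (p+1)(s+1). Then: if s ≤ τ, min{γ − p, s(p+1)} = s(p+1); and if τ < s ≤ 2τ, min{γ − p, (τ(γ−p+1)+ps)/(τ+1), s(p+1)} = s(p+1). In particular, the optimal convergence-rate exponent of a spectral algorithm with qualification τ is constant, equal to s(p+1), for all γ in this interval (the periodic plateau behavior). -/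
/-- Periodic plateau behavior: for `γ ∈ [p(s+1) + s + (max{s,τ} − τ)/τ, (p+1)(s+1))`,
the optimal convergence-rate exponent of a spectral algorithm with qualification `τ` is
constant, equal to `s(p+1)`. -/
theorem periodic_plateau
    (τ s : ℝ) (hτ : 1 ≤ τ) (hs : 0 < s) (hs2τ : s ≤ 2 * τ)
    (p : ℕ) (γ : ℝ)
    (h1 : (p : ℝ) * (s + 1) + s + (max s τ - τ) / τ ≤ γ)
    (h2 : γ < ((p : ℝ) + 1) * (s + 1)) :
    (s ≤ τ → min (γ - (p : ℝ)) (s * ((p : ℝ) + 1)) = s * ((p : ℝ) + 1)) ∧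
    (τ < s → min (γ - (p : ℝ))
      (min ((τ * (γ - (p : ℝ) + 1) + (p : ℝ) * s) / (τ + 1)) (s * ((p : ℝ) + 1)))
        = s * ((p : ℝ) + 1)) := by
  have hτ0 : (0:ℝ) < τ := by linarith
  constructor
  · intro hsτ
    rw [max_eq_right hsτ] at h1
    simp only [sub_self, zero_div, add_zero] at h1
    rw [min_eq_right]
    nlinarith
  · intro hτs
    rw [max_eq_left hτs.le] at h1
    have key : (p : ℝ) * (s + 1) + s + (s - τ)/τ ≤ γ := h1
    have hd : (s - τ)/τ ≥ 0 := div_nonneg (by linarith) hτ0.le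
    have hkey' : (s - τ) ≤ τ * ((s-τ)/τ) := by
      field_simp
      exact le_refl _
    have h3 : γ - (p:ℝ) ≥ s * ((p:ℝ)+1) := by nlinarith
    have h4 : (τ * (γ - (p : ℝ) + 1) + (p : ℝ) * s) / (τ + 1) ≥ s * ((p:ℝ)+1) := by
      rw [ge_iff_le, le_div_iff₀ (by linarith)]
      nlinarith
    rw [min_eq_right h4]
    exact min_eq_right h3
end

section
/- Let s > 1 and γ > 0 be reals, let p be a natural number with p(s+1) ≤ γ < (p+1)(s+1), and set s̃ = min{s, 2}. If either (i) 1 < s ≤ 2 and p(s+1) + 1 < γ < p(s+1) + 2s − 1, or (ii) s > 2 and p(s+1) + 1 < γ < (p+1)(s+1), then min{γ − p, (γ − p + p·s̃ + 1)/2, s̃·(p+1)} < min{γ − p, s·(p+1)}. That is, on these ranges of γ the optimally tuned KRR convergence-rate exponent is strictly smaller than the minimax (kernel gradient flow) exponent — the saturation effect of KRR in large dimensions. -/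
/-! The middle KRR exponent `(γ - p + p s̃ + 1) / 2` lies below `γ - p` as soon as
`γ > p (s̃ + 1) + 1`. For `s ≤ 2` it also lies below the minimax exponent `s (p + 1)` exactly
when `γ < p (s + 1) + 2s - 1`; for `s > 2` the saturated exponent `s̃ (p + 1) = 2 (p + 1)`
already lies below `s (p + 1)`. -/

theorem min_min_lt_min_of_lt {α : Type*} [LinearOrder α] {a b c d : α}
    (hba : b < a) (hd : min b c < d) : min a (min b c) < min a d :=
  lt_min ((min_le_right _ _).trans_lt ((min_le_left _ _).trans_lt hba))
    ((min_le_right _ _).trans_lt hd)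

theorem krr_saturation_effect_general
    (s γ : ℝ) (p : ℕ)
    (st : ℝ) (hst : st = min s 2)
    (h : (s ≤ 2 ∧ (p : ℝ) * (s + 1) + 1 < γ ∧ γ < (p : ℝ) * (s + 1) + 2 * s - 1) ∨
         (2 < s ∧ (p : ℝ) * (s + 1) + 1 < γ)) :
    min (γ - (p : ℝ)) (min ((γ - (p : ℝ) + (p : ℝ) * st + 1) / 2) (st * ((p : ℝ) + 1)))
      < min (γ - (p : ℝ)) (s * ((p : ℝ) + 1)) := by
  rcases h with ⟨hs, hγ_lo, hγ_hi⟩ | ⟨hs, hγ_lo⟩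
  · rw [hst, min_eq_left hs]
    have hmid_lt : (γ - p + p * s + 1) / 2 < γ - p := by linarith
    have hmid_lt_minimax : (γ - p + p * s + 1) / 2 < s * (p + 1) := by linarith
    exact min_min_lt_min_of_lt hmid_lt ((min_le_left _ _).trans_lt hmid_lt_minimax)
  · rw [hst, min_eq_right hs.le]
    -- `p (s + 1) ≥ 3p` turns the lower bound on `γ` into `γ - p > 2p + 1`.
    have hps : (p : ℝ) * 2 ≤ p * s := mul_le_mul_of_nonneg_left hs.le p.cast_nonneg
    have hmid_lt : (γ - p + p * 2 + 1) / 2 < γ - p := by linarith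
    have hsat : 2 * ((p : ℝ) + 1) < s * (p + 1) := mul_lt_mul_of_pos_right hs (by positivity)
    exact min_min_lt_min_of_lt hmid_lt ((min_le_right _ _).trans_lt hsat)

/-- Saturation effect of KRR in large dimensions: for (i) `1 < s ≤ 2` and
`γ ∈ (p(s+1)+1, p(s+1)+2s−1)`, or (ii) `s > 2` and `γ ∈ (p(s+1)+1, (p+1)(s+1))`,
the optimally tuned KRR convergence-rate exponent
`min{γ−p, (γ−p+p·s̃+1)/2, s̃(p+1)}` (with `s̃ = min{s,2}`) is strictly smaller than the
minimax exponent `min{γ−p, s(p+1)}` achieved by kernel gradient flow. -/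
theorem krr_saturation_effect
    (s γ : ℝ) (hs : 1 < s) (hγ : 0 < γ) (p : ℕ)
    (hp1 : (p : ℝ) * (s + 1) ≤ γ) (hp2 : γ < ((p : ℝ) + 1) * (s + 1))
    (st : ℝ) (hst : st = min s 2)
    (h : (s ≤ 2 ∧ (p : ℝ) * (s + 1) + 1 < γ ∧ γ < (p : ℝ) * (s + 1) + 2 * s - 1) ∨
         (2 < s ∧ (p : ℝ) * (s + 1) + 1 < γ)) :
    min (γ - (p : ℝ)) (min ((γ - (p : ℝ) + (p : ℝ) * st + 1) / 2) (st * ((p : ℝ) + 1)))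
      < min (γ - (p : ℝ)) (s * ((p : ℝ) + 1)) :=
  krr_saturation_effect_general s γ p st hst h
end
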